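/- arXiv:2304.14112 — 4 statements merged into one kernel-verified Lean document; each statement's English description precedes it below -/
import Mathlib

section
/- For the div–curl operator on ℝ³, whose symbol at ξ ∈ ℝ³ sends v ∈ ℝ³ to (ξ · v, ξ × v) ∈ ℝ × ℝ³, one has ⋂_{ξ ∈ ℝ³ \ {0}} { (ξ · v, ξ × v) : v ∈ ℝ³ } = ℝ × {0}; in particular this intersection is not reduced to {0}, so the div–curl operator is not cancelling. -/
/-!
The image of the symbol at `ξ ≠ 0` contains every `(a, 0)`: take `v` a multiple of `ξ`, so that
`ξ × v = 0` and `ξ · v` is any prescribed scalar. Conversely, `ξ × v` is always orthogonal to `ξ`,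
so a vector `w` lying in `ξ × ℝ³` for the three standard basis vectors `ξ = eᵢ` has `wᵢ = 0` for
every `i`.
-/

variable {R : Type*}

def divCurlSymbolRange [CommRing R] (ξ : Fin 3 → R) : Set (R × (Fin 3 → R)) :=
  {p | ∃ v, p = (ξ ⬝ᵥ v, crossProduct ξ v)}

theorem eq_zero_of_forall_mem_range_cross_single [CommRing R] {w : Fin 3 → R}
    (hw : ∀ i, ∃ v, w = crossProduct (Pi.single i 1) v) : w = 0 := by
  funext i
  obtain ⟨v, rfl⟩ := hw i
  simpa [single_dotProduct] using dot_self_cross (Pi.single i (1 : R)) v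

theorem mk_zero_mem_divCurlSymbolRange [Field R] [LinearOrder R] [IsStrictOrderedRing R]
    {ξ : Fin 3 → R} (hξ : ξ ≠ 0) (a : R) : (a, 0) ∈ divCurlSymbolRange ξ := by
  have hξξ : ξ ⬝ᵥ ξ ≠ 0 := dotProduct_self_eq_zero.not.mpr hξ
  refine ⟨(a / (ξ ⬝ᵥ ξ)) • ξ, ?_⟩
  rw [dotProduct_smul, map_smul, cross_self, smul_zero, smul_eq_mul, div_mul_cancel₀ a hξξ]

theorem iInter_divCurlSymbolRange [Field R] [LinearOrder R] [IsStrictOrderedRing R] :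
    ⋂ ξ ∈ {ξ : Fin 3 → R | ξ ≠ 0}, divCurlSymbolRange ξ = Set.univ ×ˢ {0} := by
  ext ⟨a, w⟩
  simp only [Set.mem_iInter, Set.mem_ofPred_eq, Set.mem_prod, Set.mem_univ,
    Set.mem_singleton_iff, true_and]
  refine ⟨fun h => eq_zero_of_forall_mem_range_cross_single fun i => ?_, ?_⟩
  · obtain ⟨v, hv⟩ := h (Pi.single i 1) (Pi.single_ne_zero_iff.mpr one_ne_zero)
    exact ⟨v, (Prod.ext_iff.mp hv).2⟩
  · rintro rfl ξ hξ
    exact mk_zero_mem_divCurlSymbolRange hξ a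

/-- For the div–curl operator on `ℝ³`, whose symbol at `ξ` sends `v` to
`(ξ · v, ξ × v)`, the intersection over `ξ ≠ 0` of the images of the symbol equals
`ℝ × {0}`; in particular it is not reduced to `{0}`, so the operator is not
cancelling. -/
theorem stmt7 :
    (⋂ ξ ∈ {ξ : Fin 3 → ℝ | ξ ≠ 0},
        {p : ℝ × (Fin 3 → ℝ) | ∃ v : Fin 3 → ℝ, p = (∑ i, ξ i * v i, crossProduct ξ v)})
      = Set.univ ×ˢ ({0} : Set (Fin 3 → ℝ)) ∧
    (⋂ ξ ∈ {ξ : Fin 3 → ℝ | ξ ≠ 0},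
        {p : ℝ × (Fin 3 → ℝ) | ∃ v : Fin 3 → ℝ, p = (∑ i, ξ i * v i, crossProduct ξ v)})
      ≠ ({0} : Set (ℝ × (Fin 3 → ℝ))) := by
  change ⋂ ξ ∈ {ξ : Fin 3 → ℝ | ξ ≠ 0}, divCurlSymbolRange ξ = _ ∧
    ⋂ ξ ∈ {ξ : Fin 3 → ℝ | ξ ≠ 0}, divCurlSymbolRange ξ ≠ _
  rw [iInter_divCurlSymbolRange]
  refine ⟨rfl, fun h => ?_⟩
  have h10 : ((1 : ℝ), (0 : Fin 3 → ℝ)) ∈ Set.univ ×ˢ ({0} : Set (Fin 3 → ℝ)) := by simp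
  rw [h] at h10
  simp at h10
end

section
/- Let n ≥ 4 and m ∈ {2, …, n−2}. For ξ ∈ ℝⁿ and an alternating m-form v on ℝⁿ, let ξ ∧ v be the alternating (m+1)-form defined by (ξ ∧ v)(h₀, …, h_m) = Σ_{i=0}^{m} (−1)^i ⟨ξ, h_i⟩ v(h₀, …, ĥ_i, …, h_m), and let ξ ⌟ v be the alternating (m−1)-form defined by (ξ ⌟ v)(h₁, …, h_{m−1}) = v(ξ, h₁, …, h_{m−1}). Then ⋂_{ξ ∈ ℝⁿ \ {0}} { (ξ ∧ v, ξ ⌟ v) : v an alternating m-form on ℝⁿ } = {(0,0)}; that is, the Hodge operator u ↦ (du, d*u) is cancelling. -/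
noncomputable section

/-- The exterior product `ξ ∧ v` of a vector with an alternating `m`-form, as a map
on `(m+1)`-tuples: `(ξ ∧ v)(h₀,…,h_m) = ∑ᵢ (−1)ⁱ ⟨ξ, hᵢ⟩ v(h₀,…,ĥᵢ,…,h_m)`. -/
def wedgeMap {n m : ℕ} (ξ : EuclideanSpace ℝ (Fin n))
    (v : AlternatingMap ℝ (EuclideanSpace ℝ (Fin n)) ℝ (Fin m)) :
    (Fin (m + 1) → EuclideanSpace ℝ (Fin n)) → ℝ :=
  fun h => ∑ i : Fin (m + 1),
    (-1 : ℝ) ^ (i : ℕ) * (inner ℝ ξ (h i) : ℝ) * v (fun j => h (i.succAbove j))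

/-- The interior product `ξ ⌟ v` of a vector with an alternating `m`-form, as a map
on `(m−1)`-tuples: `(ξ ⌟ v)(h₁,…,h_{m−1}) = v(ξ, h₁,…,h_{m−1})`. -/
def interiorMap {n m : ℕ} (ξ : EuclideanSpace ℝ (Fin n))
    (v : AlternatingMap ℝ (EuclideanSpace ℝ (Fin n)) ℝ (Fin m)) :
    (Fin (m - 1) → EuclideanSpace ℝ (Fin n)) → ℝ :=
  fun h => v (fun j : Fin m =>
    if h0 : (j : ℕ) = 0 then ξ else h ⟨(j : ℕ) - 1, by have := j.isLt; omega⟩)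

/-!
Let `(a, b)` lie in the intersection. To see `a(h₀,…,h_m) = 0`, choose `ξ ≠ 0` orthogonal to the `m + 1 < n` vectors `hᵢ`: every
term of `ξ ∧ v` then vanishes. To see `b(h₁,…,h_{m−1}) = 0`, take `ξ = h₁` (or any `ξ` if
`h₁ = 0`): then `v(ξ, h₁,…)` has a repeated (or zero) argument.
-/

open Module in
theorem exists_ne_zero_forall_inner_eq_zero {𝕜 E ι : Type*} [RCLike 𝕜] [NormedAddCommGroup E]
    [InnerProductSpace 𝕜 E] [FiniteDimensional 𝕜 E] [Fintype ι] (f : ι → E)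
    (hf : Fintype.card ι < finrank 𝕜 E) : ∃ ξ : E, ξ ≠ 0 ∧ ∀ i, inner 𝕜 ξ (f i) = 0 := by
  set K := Submodule.span 𝕜 (Set.range f)
  have hK : K ≠ ⊤ :=
    (Submodule.lt_top_of_finrank_lt_finrank ((finrank_range_le_card f).trans_lt hf)).ne
  obtain ⟨ξ, hξK, hξ⟩ :=
    Submodule.exists_mem_ne_zero_of_ne_bot (mt Submodule.orthogonal_eq_bot_iff.mp hK)
  exact ⟨ξ, hξ, fun i =>
    Submodule.inner_left_of_mem_orthogonal (Submodule.subset_span (Set.mem_range_self i)) hξK⟩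

section SymbolOfHodge

variable {n m : ℕ}

@[simp]
theorem wedgeMap_zero (ξ : EuclideanSpace ℝ (Fin n)) :
    wedgeMap ξ (0 : AlternatingMap ℝ _ ℝ (Fin m)) = 0 := by
  funext h
  simp [wedgeMap]

@[simp]
theorem interiorMap_zero (ξ : EuclideanSpace ℝ (Fin n)) :
    interiorMap ξ (0 : AlternatingMap ℝ _ ℝ (Fin m)) = 0 := by
  funext h
  simp [interiorMap]

theorem wedgeMap_apply_eq_zero_of_forall_inner_eq_zero {ξ : EuclideanSpace ℝ (Fin n)}
    (v : AlternatingMap ℝ (EuclideanSpace ℝ (Fin n)) ℝ (Fin m))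
    {h : Fin (m + 1) → EuclideanSpace ℝ (Fin n)} (hξ : ∀ i, inner ℝ ξ (h i) = 0) :
    wedgeMap ξ v h = 0 := by
  simp [wedgeMap, hξ]

theorem interiorMap_apply_eq_zero_of_head_eq_zero (ξ : EuclideanSpace ℝ (Fin n))
    (v : AlternatingMap ℝ (EuclideanSpace ℝ (Fin n)) ℝ (Fin m))
    {h : Fin (m - 1) → EuclideanSpace ℝ (Fin n)} (hm : 0 < m - 1) (h0 : h ⟨0, hm⟩ = 0) :
    interiorMap ξ v h = 0 :=
  v.map_coord_zero ⟨1, by omega⟩ (by simpa using h0)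

theorem interiorMap_head_apply_eq_zero
    (v : AlternatingMap ℝ (EuclideanSpace ℝ (Fin n)) ℝ (Fin m))
    (h : Fin (m - 1) → EuclideanSpace ℝ (Fin n)) (hm : 0 < m - 1) :
    interiorMap (h ⟨0, hm⟩) v h = 0 :=
  v.map_eq_zero_of_eq _ (i := ⟨0, by omega⟩) (j := ⟨1, by omega⟩) (by simp)
    (by simp [Fin.ext_iff])

end SymbolOfHodge

theorem stmt8_general (n m : ℕ) (hm2 : 2 ≤ m) (hmn : m ≤ n - 2) :
    (⋂ ξ ∈ {ξ : EuclideanSpace ℝ (Fin n) | ξ ≠ 0},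
        {p : ((Fin (m + 1) → EuclideanSpace ℝ (Fin n)) → ℝ)
            × ((Fin (m - 1) → EuclideanSpace ℝ (Fin n)) → ℝ) |
          ∃ v : AlternatingMap ℝ (EuclideanSpace ℝ (Fin n)) ℝ (Fin m),
            p = (wedgeMap ξ v, interiorMap ξ v)})
      = {(0, 0)} := by
  refine Set.eq_singleton_iff_unique_mem.mpr
    ⟨Set.mem_iInter₂.mpr fun ξ _ => ⟨0, by simp⟩, fun p hp => ?_⟩
  replace hp := Set.mem_iInter₂.mp hp
  have hm : 0 < m - 1 := by omega
  have hcard (k : ℕ) (hk : k ≤ m + 1) :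
      Fintype.card (Fin k) < Module.finrank ℝ (EuclideanSpace ℝ (Fin n)) := by
    simp only [Fintype.card_fin, finrank_euclideanSpace_fin]
    omega
  refine Prod.ext (funext fun h => ?_) (funext fun h => ?_)
  · obtain ⟨ξ, hξ, hξh⟩ := exists_ne_zero_forall_inner_eq_zero h (hcard _ le_rfl)
    obtain ⟨v, rfl⟩ := hp ξ hξ
    exact wedgeMap_apply_eq_zero_of_forall_inner_eq_zero v hξh
  by_cases h0 : h ⟨0, hm⟩ = 0
  · obtain ⟨ξ, hξ, -⟩ := exists_ne_zero_forall_inner_eq_zero h (hcard _ (by omega))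
    obtain ⟨v, rfl⟩ := hp ξ hξ
    exact interiorMap_apply_eq_zero_of_head_eq_zero ξ v hm h0
  · obtain ⟨v, rfl⟩ := hp _ h0
    exact interiorMap_head_apply_eq_zero v h hm

/-- The Hodge operator `u ↦ (du, d*u)` on `m`-forms, `2 ≤ m ≤ n−2`, is cancelling:
the intersection over `ξ ≠ 0` of the images `{(ξ ∧ v, ξ ⌟ v) : v}` of its symbol is
trivial. -/
theorem stmt8 (n m : ℕ) (hn : 4 ≤ n) (hm2 : 2 ≤ m) (hmn : m ≤ n - 2) :
    (⋂ ξ ∈ {ξ : EuclideanSpace ℝ (Fin n) | ξ ≠ 0},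
        {p : ((Fin (m + 1) → EuclideanSpace ℝ (Fin n)) → ℝ)
            × ((Fin (m - 1) → EuclideanSpace ℝ (Fin n)) → ℝ) |
          ∃ v : AlternatingMap ℝ (EuclideanSpace ℝ (Fin n)) ℝ (Fin m),
            p = (wedgeMap ξ v, interiorMap ξ v)})
      = {(0, 0)} :=
  stmt8_general n m hm2 hmn
end
end

section
/- Let n ≥ 2. Then ⋂_{ξ ∈ ℝⁿ \ {0}} { (ξ vᵀ + v ξᵀ)/2 : v ∈ ℝⁿ } = {0} in the space of symmetric n×n real matrices; that is, the symmetric derivative operator u ↦ D_sym u = (Du + (Du)ᵀ)/2 is cancelling. -/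
/-!
Testing the symbol at `ξ = e_k` shows `M j j = ξ j * v j = 0` for every `j ≠ k`, so (as `n ≥ 2`)
the diagonal of `M` vanishes. Testing it at `ξ = e_j + e_k` then forces `v j = v k = 0`, hence
`M j k = (ξ j * v k + v j * ξ k) / 2 = 0`.
-/

open Matrix

section SymmetricSymbol

variable {ι K : Type*} [Field K] [CharZero K]

def symSymbol (ξ v : ι → K) : Matrix ι ι K :=
  (1 / 2 : K) • (vecMulVec ξ v + vecMulVec v ξ)

theorem symSymbol_apply (ξ v : ι → K) (j k : ι) :
    symSymbol ξ v j k = (ξ j * v k + v j * ξ k) / 2 := by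
  simp only [symSymbol, Matrix.smul_apply, Matrix.add_apply, vecMulVec_apply, smul_eq_mul]
  ring

theorem symSymbol_apply_self (ξ v : ι → K) (j : ι) : symSymbol ξ v j j = ξ j * v j := by
  rw [symSymbol_apply]
  ring

theorem symSymbol_apply_eq_zero {ξ v : ι → K} {j k : ι} (hξj : ξ j = 1) (hξk : ξ k = 1)
    (hjj : symSymbol ξ v j j = 0) (hkk : symSymbol ξ v k k = 0) : symSymbol ξ v j k = 0 := by
  rw [symSymbol_apply_self, hξj, one_mul] at hjj
  rw [symSymbol_apply_self, hξk, one_mul] at hkk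
  rw [symSymbol_apply, hjj, hkk]
  ring

theorem eq_zero_of_forall_exists_eq_symSymbol [DecidableEq ι] [Nontrivial ι] {M : Matrix ι ι K}
    (hM : ∀ ξ : ι → K, ξ ≠ 0 → ∃ v, M = symSymbol ξ v) : M = 0 := by
  have single_ne_zero (i : ι) : (Pi.single i 1 : ι → K) ≠ 0 := by simp
  have diag (j : ι) : M j j = 0 := by
    obtain ⟨k, hkj⟩ := exists_ne j
    obtain ⟨v, rfl⟩ := hM _ (single_ne_zero k)
    simp [symSymbol_apply_self, hkj.symm]
  ext j k
  by_cases hjk : j = k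
  · subst hjk
    exact diag j
  set ξ : ι → K := Pi.single j 1 + Pi.single k 1
  have hξj : ξ j = 1 := by simp [ξ, hjk]
  have hξk : ξ k = 1 := by simp [ξ, Ne.symm hjk]
  obtain ⟨v, rfl⟩ := hM ξ fun h => by simp [h] at hξj
  exact symSymbol_apply_eq_zero hξj hξk (diag j) (diag k)

end SymmetricSymbol

/-- The symmetric derivative operator `u ↦ D_sym u` is cancelling for `n ≥ 2`:
the intersection over `ξ ≠ 0` of the images `{(ξ vᵀ + v ξᵀ)/2 : v ∈ ℝⁿ}` of its
symbol is `{0}` (in the space of symmetric `n × n` real matrices). -/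
theorem stmt9 (n : ℕ) (hn : 2 ≤ n) :
    (⋂ ξ ∈ {ξ : Fin n → ℝ | ξ ≠ 0},
        {M : Matrix (Fin n) (Fin n) ℝ | ∃ v : Fin n → ℝ,
          M = (1 / 2 : ℝ) • (Matrix.vecMulVec ξ v + Matrix.vecMulVec v ξ)})
      = ({0} : Set (Matrix (Fin n) (Fin n) ℝ)) := by
  have : Nontrivial (Fin n) := Fin.nontrivial_iff_two_le.mpr hn
  ext M
  simp only [Set.mem_iInter, Set.mem_ofPred_eq, Set.mem_singleton_iff]
  constructor
  · exact eq_zero_of_forall_exists_eq_symSymbol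
  · rintro rfl ξ -
    exact ⟨0, by simp⟩
end

section
/- Let n, k ≥ 1 and let A(D) be a homogeneous linear differential operator of order k on ℝⁿ from V to E which is injectively elliptic. Then there exist m ∈ ℕ \ {0} and a family of linear maps L_β : E → E indexed by multi-indices β ∈ ℕⁿ with |β| = m such that, setting L(ξ) = Σ_{|β|=m} ξ^β L_β for ξ ∈ ℝⁿ, one has for every ξ ∈ ℝⁿ \ {0} that the kernel of L(ξ) equals the image A(ξ)[V] of the symbol of A(D). -/
/-!
For `ξ ≠ 0` let `M(ξ)` be the matrix of `A(ξ)` in fixed bases and `G = MᵀM` its Gram matrix,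
which is invertible because `A(ξ)` is injective. As `adj(G) Mᵀ` is a left inverse of `M` up to
the factor `det G`, the map `det G • 1 - M adj(G) Mᵀ` has kernel exactly the range of `M`. Its
entries are homogeneous polynomials of degree `2k dim V` in `ξ`; multiplied by `|ξ|²` they become
the symbol of an operator of positive order.
-/

noncomputable section

/-- First-order partial derivative in the `i`-th coordinate direction. -/
def pd {n : ℕ} {V : Type*} [NormedAddCommGroup V] [NormedSpace ℝ V] (i : Fin n)
    (u : EuclideanSpace ℝ (Fin n) → V) : EuclideanSpace ℝ (Fin n) → V :=
  fun x => fderiv ℝ u x (EuclideanSpace.single i 1)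

/-- Iterated partial derivative `∂^α`. -/
def pdMulti {n : ℕ} {V : Type*} [NormedAddCommGroup V] [NormedSpace ℝ V] (α : Fin n → ℕ)
    (u : EuclideanSpace ℝ (Fin n) → V) : EuclideanSpace ℝ (Fin n) → V :=
  (List.finRange n).foldr (fun i v => (pd i)^[α i] v) u

/-- The homogeneous differential operator `A(D) = ∑_{|α|=k} A_α ∂^α` applied to `u`. -/
def opApply {n : ℕ} {V E : Type*} [NormedAddCommGroup V] [NormedSpace ℝ V]
    [NormedAddCommGroup E] [NormedSpace ℝ E]
    (k : ℕ) (A : (Fin n → ℕ) → (V →ₗ[ℝ] E))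
    (u : EuclideanSpace ℝ (Fin n) → V) : EuclideanSpace ℝ (Fin n) → E :=
  fun x => ∑ α ∈ Finset.Nat.antidiagonalTuple n k, A α (pdMulti α u x)

/-- The symbol `A(ξ) = ∑_{|α|=k} ξ^α A_α` of the operator. -/
def symb {n : ℕ} {V E : Type*} [NormedAddCommGroup V] [NormedSpace ℝ V]
    [NormedAddCommGroup E] [NormedSpace ℝ E]
    (k : ℕ) (A : (Fin n → ℕ) → (V →ₗ[ℝ] E)) (ξ : EuclideanSpace ℝ (Fin n)) :
    V →ₗ[ℝ] E :=
  ∑ α ∈ Finset.Nat.antidiagonalTuple n k, (∏ i, ξ i ^ α i) • A α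

open MvPolynomial Matrix

section Homogeneous

variable {σ R : Type*} [CommRing R]

lemma MvPolynomial.isHomogeneous_det {ι : Type*} [Fintype ι] [DecidableEq ι]
    (M : Matrix ι ι (MvPolynomial σ R)) (d : ι → ℕ) (hM : ∀ i j, (M i j).IsHomogeneous (d i)) :
    M.det.IsHomogeneous (∑ i, d i) := by
  rw [Matrix.det_apply]
  refine IsHomogeneous.sum _ _ _ fun p _ => ?_
  have hp : (∏ i, M (p i) i).IsHomogeneous (∑ i, d i) := by
    rw [← Equiv.sum_comp p d]
    exact IsHomogeneous.prod _ _ _ fun i _ => hM (p i) i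
  rcases Int.units_eq_one_or (Equiv.Perm.sign p) with hs | hs <;> rw [hs]
  · simpa using hp
  · simpa using hp.neg

lemma MvPolynomial.isHomogeneous_adjugate {ι : Type*} [Fintype ι] [DecidableEq ι]
    (M : Matrix ι ι (MvPolynomial σ R)) (c : ℕ) (hM : ∀ i j, (M i j).IsHomogeneous c) (i j : ι) :
    (M.adjugate i j).IsHomogeneous (c * (Fintype.card ι - 1)) := by
  have hdeg : ∑ l, Function.update (fun _ => c) j 0 l = c * (Fintype.card ι - 1) := by
    rw [Finset.sum_update_of_mem (Finset.mem_univ j), Finset.sum_const, Finset.card_sdiff,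
      Finset.card_univ, smul_eq_mul, zero_add, mul_comm]
    simp
  rw [Matrix.adjugate_apply, ← hdeg]
  refine isHomogeneous_det _ _ fun r l => ?_
  rcases eq_or_ne r j with rfl | hr
  · rw [Matrix.updateRow_self, Function.update_self, Pi.single_apply]
    split_ifs
    · exact isHomogeneous_one σ R
    · exact isHomogeneous_zero σ R 0
  · rw [Matrix.updateRow_ne hr, Function.update_of_ne hr]
    exact hM r l

lemma MvPolynomial.IsHomogeneous.sum_antidiagonalTuple_coeff_mul_prod_pow {n m : ℕ}
    {p : MvPolynomial (Fin n) R} (hp : p.IsHomogeneous m) (x : Fin n → R) :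
    ∑ β ∈ Finset.Nat.antidiagonalTuple n m,
      coeff (Finsupp.equivFunOnFinite.symm β) p * ∏ i, x i ^ β i = eval x p := by
  classical
  have hinj : Set.InjOn Finsupp.equivFunOnFinite.symm
      (Finset.Nat.antidiagonalTuple n m : Set (Fin n → ℕ)) :=
    Finsupp.equivFunOnFinite.symm.injective.injOn
  have hsupp : p.support ⊆
      (Finset.Nat.antidiagonalTuple n m).image Finsupp.equivFunOnFinite.symm := by
    intro d hd
    refine Finset.mem_image.mpr ⟨d, ?_, Finsupp.equivFunOnFinite.symm_apply_apply d⟩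
    rw [Finset.Nat.mem_antidiagonalTuple, ← hp (mem_support_iff.mp hd)]
    simp [Finsupp.weight_apply, Finsupp.sum_fintype]
  rw [eval_eq', Finset.sum_subset hsupp fun d _ hd => by rw [notMem_support_iff.mp hd, zero_mul],
    Finset.sum_image hinj]
  rfl

end Homogeneous

lemma LinearMap.ker_smul_id_sub_comp_eq_range {K V E : Type*} [Field K] [AddCommGroup V]
    [Module K V] [AddCommGroup E] [Module K E] {f : V →ₗ[K] E} {g : E →ₗ[K] V} {d : K}
    (hd : d ≠ 0) (hgf : g ∘ₗ f = d • LinearMap.id) :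
    ker (d • LinearMap.id - f ∘ₗ g) = range f := by
  ext v
  simp only [mem_ker, sub_apply, smul_apply, id_apply, comp_apply, sub_eq_zero, mem_range]
  constructor
  · intro hv
    exact ⟨d⁻¹ • g v, by rw [map_smul, ← hv, inv_smul_smul₀ hd]⟩
  · rintro ⟨w, rfl⟩
    rw [← comp_apply g f, hgf, smul_apply, id_apply, map_smul]

section GramComplement

variable {ι κ : Type*} [Fintype ι] [DecidableEq ι] [Fintype κ] [DecidableEq κ]

def Matrix.gramComplement {R : Type*} [CommRing R] (M : Matrix κ ι R) : Matrix κ κ R :=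
  (Mᵀ * M).det • 1 - M * (Mᵀ * M).adjugate * Mᵀ

lemma Matrix.gramComplement_map {R S : Type*} [CommRing R] [CommRing S] (f : R →+* S)
    (M : Matrix κ ι R) : M.gramComplement.map f = (M.map f).gramComplement := by
  have hdet := f.map_det (Mᵀ * M)
  have hadj := f.map_adjugate (Mᵀ * M)
  simp only [RingHom.mapMatrix_apply, Matrix.map_mul, Matrix.transpose_map] at hdet hadj
  rw [gramComplement, gramComplement, ← hdet, ← hadj]
  ext i j
  simp [Matrix.mul_apply, Matrix.one_apply, map_sum, apply_ite f]

lemma MvPolynomial.isHomogeneous_gramComplement {σ R : Type*} [CommRing R]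
    (M : Matrix κ ι (MvPolynomial σ R)) (k : ℕ) (hM : ∀ i j, (M i j).IsHomogeneous k) (i j : κ) :
    (M.gramComplement i j).IsHomogeneous (2 * k * Fintype.card ι) := by
  have hG : ∀ a b, ((Mᵀ * M) a b).IsHomogeneous (2 * k) := fun a b =>
    IsHomogeneous.sum _ _ _ fun l _ => two_mul k ▸ (hM l a).mul (hM l b)
  simp only [gramComplement, Matrix.sub_apply, Matrix.smul_apply, Matrix.one_apply, smul_eq_mul,
    mul_ite, mul_one, mul_zero, Matrix.mul_apply, Matrix.transpose_apply, Finset.sum_mul]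
  refine IsHomogeneous.sub ?_ (IsHomogeneous.sum _ _ _ fun b _ =>
    IsHomogeneous.sum _ _ _ fun a _ => ?_)
  · split_ifs
    · simpa [mul_comm] using isHomogeneous_det _ _ hG
    · exact isHomogeneous_zero σ R _
  ·
    -- the sum over `a : ι` is nonempty, so `k + 2k (card ι - 1) + k = 2k card ι`
    have hcard : Fintype.card ι = Fintype.card ι - 1 + 1 := (Nat.succ_pred_eq_of_pos
      (Fintype.card_pos_iff.mpr ⟨a⟩)).symm
    have := ((hM i a).mul (isHomogeneous_adjugate _ _ hG a b)).mul (hM j b)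
    rw [hcard]
    convert this using 1
    ring

lemma Matrix.ker_toLin_gramComplement {K V E : Type*} [Field K] [AddCommGroup V] [Module K V]
    [AddCommGroup E] [Module K E] (bV : Module.Basis ι K V) (bE : Module.Basis κ K E)
    {M : Matrix κ ι K} (hM : (Mᵀ * M).det ≠ 0) :
    LinearMap.ker (toLin bE bE M.gramComplement) = LinearMap.range (toLin bV bE M) := by
  have hgf : toLin bE bV ((Mᵀ * M).adjugate * Mᵀ) ∘ₗ toLin bV bE M =
      (Mᵀ * M).det • LinearMap.id := by
    rw [← toLin_mul bV bE bV, Matrix.mul_assoc, adjugate_mul, map_smul, toLin_one]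
  rw [gramComplement, Matrix.mul_assoc, map_sub, map_smul, toLin_one, toLin_mul bE bV bE]
  exact LinearMap.ker_smul_id_sub_comp_eq_range hM hgf

end GramComplement


lemma Matrix.det_transpose_mul_self_ne_zero {ι κ K : Type*} [Fintype ι] [DecidableEq ι]
    [Fintype κ] [Field K] [LinearOrder K] [IsStrictOrderedRing K] {M : Matrix κ ι K}
    (hM : Function.Injective M.mulVec) : (Mᵀ * M).det ≠ 0 := by
  rw [Ne, ← exists_mulVec_eq_zero_iff]
  rintro ⟨v, hv, hMv⟩
  have hv' : v ∈ LinearMap.ker (Mᵀ * M).mulVecLin := hMv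
  rw [ker_mulVecLin_transpose_mul_self, LinearMap.mem_ker, mulVecLin_apply,
    ← mulVec_zero M] at hv'
  exact hv (hM hv')

lemma LinearMap.injective_mulVec_toMatrix {ι κ K V E : Type*} [Fintype ι] [DecidableEq ι]
    [Fintype κ] [Field K] [AddCommGroup V] [Module K V] [AddCommGroup E] [Module K E]
    (bV : Module.Basis ι K V) (bE : Module.Basis κ K E) {f : V →ₗ[K] E}
    (hf : Function.Injective f) : Function.Injective (toMatrix bV bE f).mulVec := by
  have hcoord : ∀ x, toMatrix bV bE f *ᵥ x = bE.equivFun (f (bV.equivFun.symm x)) := fun x => by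
    have := toMatrix_mulVec_repr bV bE f (bV.equivFun.symm x)
    rwa [← Module.Basis.equivFun_apply, ← Module.Basis.equivFun_apply,
      LinearEquiv.apply_symm_apply] at this
  intro x y hxy
  rw [hcoord, hcoord] at hxy
  exact bV.equivFun.symm.injective (hf (bE.equivFun.injective hxy))

section PolynomialSymbol

variable {n : ℕ} {V E : Type*} [NormedAddCommGroup V] [NormedSpace ℝ V]
  [NormedAddCommGroup E] [NormedSpace ℝ E] {ι κ : Type*} [Fintype ι] [DecidableEq ι]
  [Fintype κ] (bV : Module.Basis ι ℝ V) (bE : Module.Basis κ ℝ E)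

def symbMatrix (k : ℕ) (A : (Fin n → ℕ) → (V →ₗ[ℝ] E)) : Matrix κ ι (MvPolynomial (Fin n) ℝ) :=
  Matrix.of fun i j => ∑ α ∈ Finset.Nat.antidiagonalTuple n k,
    monomial (Finsupp.equivFunOnFinite.symm α) (LinearMap.toMatrix bV bE (A α) i j)

lemma isHomogeneous_symbMatrix (k : ℕ) (A : (Fin n → ℕ) → (V →ₗ[ℝ] E)) (i : κ) (j : ι) :
    (symbMatrix bV bE k A i j).IsHomogeneous k := by
  rw [symbMatrix, Matrix.of_apply]
  refine IsHomogeneous.sum _ _ _ fun α hα => isHomogeneous_monomial _ ?_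
  rw [Finsupp.degree_eq_sum]
  exact Finset.Nat.mem_antidiagonalTuple.mp hα

lemma symbMatrix_map_eval (k : ℕ) (A : (Fin n → ℕ) → (V →ₗ[ℝ] E))
    (ξ : EuclideanSpace ℝ (Fin n)) :
    (symbMatrix bV bE k A).map (eval ξ.ofLp) = LinearMap.toMatrix bV bE (symb k A ξ) := by
  ext i j
  simp only [symbMatrix, symb, Matrix.map_apply, Matrix.of_apply, map_sum, eval_monomial,
    Finsupp.prod_fintype _ _ fun _ => pow_zero _, map_smul, Matrix.sum_apply,
    Matrix.smul_apply, smul_eq_mul, mul_comm]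
  rfl

def symbOfMatrix (N : Matrix κ ι (MvPolynomial (Fin n) ℝ)) : (Fin n → ℕ) → (V →ₗ[ℝ] E) :=
  fun β => Matrix.toLin bV bE (N.map (coeff (Finsupp.equivFunOnFinite.symm β)))

lemma symb_symbOfMatrix {m : ℕ} (N : Matrix κ ι (MvPolynomial (Fin n) ℝ))
    (hN : ∀ i j, (N i j).IsHomogeneous m) (ξ : EuclideanSpace ℝ (Fin n)) :
    symb m (symbOfMatrix bV bE N) ξ = Matrix.toLin bV bE (N.map (eval ξ.ofLp)) := by
  apply (LinearMap.toMatrix bV bE).injective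
  ext i j
  rw [LinearMap.toMatrix_toLin, Matrix.map_apply,
    ← (hN i j).sum_antidiagonalTuple_coeff_mul_prod_pow, symb, map_sum, Matrix.sum_apply]
  refine Finset.sum_congr rfl fun β _ => ?_
  rw [map_smul, Matrix.smul_apply, symbOfMatrix, LinearMap.toMatrix_toLin, smul_eq_mul, mul_comm]
  rfl

end PolynomialSymbol

lemma MvPolynomial.isHomogeneous_sum_X_sq {σ R : Type*} [Fintype σ] [CommRing R] :
    (∑ i : σ, X i ^ 2 : MvPolynomial σ R).IsHomogeneous 2 :=
  IsHomogeneous.sum _ _ _ fun i _ => isHomogeneous_X_pow i 2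

theorem stmt10_general
    {V E : Type*} [NormedAddCommGroup V] [InnerProductSpace ℝ V] [FiniteDimensional ℝ V]
    [NormedAddCommGroup E] [InnerProductSpace ℝ E] [FiniteDimensional ℝ E]
    (n k : ℕ)
    (A : (Fin n → ℕ) → (V →ₗ[ℝ] E))
    (hell : ∀ ξ : EuclideanSpace ℝ (Fin n), ξ ≠ 0 → Function.Injective (symb k A ξ)) :
    ∃ (m : ℕ), 0 < m ∧ ∃ L : (Fin n → ℕ) → (E →ₗ[ℝ] E),
      ∀ ξ : EuclideanSpace ℝ (Fin n), ξ ≠ 0 →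
        LinearMap.ker (symb m L ξ) = LinearMap.range (symb k A ξ) := by
  set bV := Module.finBasis ℝ V
  set bE := Module.finBasis ℝ E
  set N := (∑ i, X i ^ 2 : MvPolynomial (Fin n) ℝ) • (symbMatrix bV bE k A).gramComplement
  have hN : ∀ i j, (N i j).IsHomogeneous (2 + 2 * k * Module.finrank ℝ V) := fun i j => by
    have := isHomogeneous_sum_X_sq.mul
      (isHomogeneous_gramComplement _ k (isHomogeneous_symbMatrix bV bE k A) i j)
    rwa [Fintype.card_fin] at this
  refine ⟨2 + 2 * k * Module.finrank ℝ V, by omega, symbOfMatrix bE bE N, fun ξ hξ => ?_⟩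
  have hNξ : N.map (eval ξ.ofLp) =
      ‖ξ‖ ^ 2 • (LinearMap.toMatrix bV bE (symb k A ξ)).gramComplement := by
    rw [← symbMatrix_map_eval, ← gramComplement_map]
    ext i j
    simp [N, EuclideanSpace.real_norm_sq_eq]
  have hdet := det_transpose_mul_self_ne_zero
    (LinearMap.injective_mulVec_toMatrix bV bE (hell ξ hξ))
  rw [symb_symbOfMatrix bE bE N hN, hNξ, map_smul, LinearMap.ker_smul _ _ (by positivity),
    ker_toLin_gramComplement bV bE hdet, Matrix.toLin_toMatrix]

/-- Compatibility conditions: if `A(D)` is injectively elliptic, there is a homogeneous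
operator `L(D)` of some order `m ≥ 1` from `E` to `E` whose symbol satisfies
`ker L(ξ) = A(ξ)[V]` for every `ξ ≠ 0`. -/
theorem stmt10
    {V E : Type*} [NormedAddCommGroup V] [InnerProductSpace ℝ V] [FiniteDimensional ℝ V]
    [NormedAddCommGroup E] [InnerProductSpace ℝ E] [FiniteDimensional ℝ E]
    (n k : ℕ) (hn : 1 ≤ n) (hk : 1 ≤ k)
    (A : (Fin n → ℕ) → (V →ₗ[ℝ] E))
    (hell : ∀ ξ : EuclideanSpace ℝ (Fin n), ξ ≠ 0 → Function.Injective (symb k A ξ)) :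
    ∃ (m : ℕ), 0 < m ∧ ∃ L : (Fin n → ℕ) → (E →ₗ[ℝ] E),
      ∀ ξ : EuclideanSpace ℝ (Fin n), ξ ≠ 0 →
        LinearMap.ker (symb m L ξ) = LinearMap.range (symb k A ξ) :=
  stmt10_general n k A hell

end
end
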